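/- arXiv:math/0312027 — 9 statements merged into one kernel-verified Lean document; each statement's English description precedes it below -/
import Mathlib

section
/- There exists a constant c > 0 such that the sequence (α_j) defined by α_0 = 1, α_1 = 1/6, and α_j = (4/(5^j - 5)) Σ_{ℓ=1}^{j-1} α_{j-ℓ} α_ℓ for j ≥ 2, satisfies 0 < α_j ≤ c · (j!)^{-log 5 / log 2} for all j ≥ 0. -/
/-!
With `γ = log 5 / log 2`, so that `(2 ^ j) ^ γ = 5 ^ j`, the weights `β j = (j!) ^ (-γ)` satisfy
`β (j - ℓ) * β ℓ = (j choose ℓ) ^ γ * β j`, and since `γ ≥ 1` and `∑ (j choose ℓ) ≤ 2 ^ j` the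
convolution `∑ β (j - ℓ) β ℓ` is at most `5 ^ j * β j`. The factor `4 / (5 ^ j - 5)` in the
recurrence cancels this growth, and strong induction gives `0 < α j ≤ β j / 6` for `j ≥ 1`.
-/

open Finset Nat

theorem factorial_rpow_neg_mul_factorial_rpow_neg {j ℓ : ℕ} (h : ℓ ≤ j) (γ : ℝ) :
    ((j - ℓ)! : ℝ) ^ (-γ) * (ℓ ! : ℝ) ^ (-γ) = (j.choose ℓ : ℝ) ^ γ * (j ! : ℝ) ^ (-γ) := by
  have hchoose : (0 : ℝ) < j.choose ℓ := by exact_mod_cast Nat.choose_pos h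
  have hfac : (j ! : ℝ) = j.choose ℓ * ((j - ℓ)! * ℓ !) := by
    rw [← Nat.choose_mul_factorial_mul_factorial h]
    push_cast
    ring
  rw [hfac, Real.mul_rpow hchoose.le (by positivity), ← mul_assoc, ← Real.rpow_add hchoose,
    add_neg_cancel, Real.rpow_zero, one_mul, Real.mul_rpow (by positivity) (by positivity)]

theorem choose_rpow_le {γ : ℝ} (hγ : 1 ≤ γ) (j ℓ : ℕ) :
    (j.choose ℓ : ℝ) ^ γ ≤ ((2 : ℝ) ^ j) ^ (γ - 1) * j.choose ℓ := by
  have hchoose : (j.choose ℓ : ℝ) ≤ 2 ^ j := by exact_mod_cast Nat.choose_le_two_pow j ℓ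
  calc (j.choose ℓ : ℝ) ^ γ = (j.choose ℓ : ℝ) ^ (γ - 1) * j.choose ℓ := by
        rw [← Real.rpow_add_one' (by positivity) (by linarith), sub_add_cancel]
    _ ≤ ((2 : ℝ) ^ j) ^ (γ - 1) * j.choose ℓ := by
        gcongr

theorem sum_choose_rpow_le {γ : ℝ} (hγ : 1 ≤ γ) (j : ℕ) :
    ∑ ℓ ∈ range (j + 1), (j.choose ℓ : ℝ) ^ γ ≤ ((2 : ℝ) ^ j) ^ γ := by
  calc ∑ ℓ ∈ range (j + 1), (j.choose ℓ : ℝ) ^ γ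
      ≤ ∑ ℓ ∈ range (j + 1), ((2 : ℝ) ^ j) ^ (γ - 1) * j.choose ℓ :=
        sum_le_sum fun ℓ _ ↦ choose_rpow_le hγ j ℓ
    _ = ((2 : ℝ) ^ j) ^ γ := by
        rw [← mul_sum, ← Nat.cast_sum, Nat.sum_range_choose, Nat.cast_pow, Nat.cast_ofNat,
          ← Real.rpow_add_one' (by positivity) (by linarith), sub_add_cancel]

theorem sum_Ico_factorial_rpow_neg_mul_le {γ : ℝ} (hγ : 1 ≤ γ) (j : ℕ) :
    ∑ ℓ ∈ Ico 1 j, ((j - ℓ)! : ℝ) ^ (-γ) * (ℓ ! : ℝ) ^ (-γ) ≤ ((2 : ℝ) ^ j) ^ γ * (j ! : ℝ) ^ (-γ) := by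
  have hsub : Ico 1 j ⊆ range (j + 1) := fun ℓ hℓ ↦ by simp only [mem_Ico, mem_range] at *; omega
  calc ∑ ℓ ∈ Ico 1 j, ((j - ℓ)! : ℝ) ^ (-γ) * (ℓ ! : ℝ) ^ (-γ)
      = ∑ ℓ ∈ Ico 1 j, (j.choose ℓ : ℝ) ^ γ * (j ! : ℝ) ^ (-γ) :=
        sum_congr rfl fun ℓ hℓ ↦
          factorial_rpow_neg_mul_factorial_rpow_neg (mem_Ico.1 hℓ).2.le γ
    _ ≤ ∑ ℓ ∈ range (j + 1), (j.choose ℓ : ℝ) ^ γ * (j ! : ℝ) ^ (-γ) :=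
        sum_le_sum_of_subset_of_nonneg hsub fun _ _ _ ↦ by positivity
    _ ≤ ((2 : ℝ) ^ j) ^ γ * (j ! : ℝ) ^ (-γ) := by
        rw [← sum_mul]
        gcongr
        exact sum_choose_rpow_le hγ j

theorem one_le_logb_two_five : 1 ≤ Real.logb 2 5 := by
  rw [Real.le_logb_iff_rpow_le (by norm_num) (by norm_num)]
  norm_num

theorem two_pow_rpow_logb_two_five (j : ℕ) : ((2 : ℝ) ^ j) ^ Real.logb 2 5 = 5 ^ j := by
  rw [← Real.rpow_pow_comm (by norm_num), Real.rpow_logb (by norm_num) (by norm_num)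
    (by norm_num)]

section Recurrence

variable {α : ℕ → ℝ}

theorem alpha_pos (hα1 : α 1 = 1/6)
    (hαrec : ∀ j ≥ 2, α j = (4 / ((5:ℝ)^j - 5)) * ∑ ℓ ∈ Ico 1 j, α (j - ℓ) * α ℓ) :
    ∀ j, 1 ≤ j → 0 < α j := by
  intro j
  induction j using Nat.strong_induction_on with
  | _ j ih =>
    intro hj
    rcases hj.eq_or_lt with rfl | hj2
    · norm_num [hα1]
    have h5 : (5 : ℝ) < 5 ^ j := by simpa using pow_lt_pow_right₀ (by norm_num : (1:ℝ) < 5) hj2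
    rw [hαrec j hj2]
    refine mul_pos (div_pos (by norm_num) (by linarith)) (sum_pos (fun ℓ hℓ ↦ ?_) ⟨1, ?_⟩)
    · rw [mem_Ico] at hℓ
      exact mul_pos (ih _ (by omega) (by omega)) (ih _ hℓ.2 hℓ.1)
    · simp only [mem_Ico]
      omega

theorem alpha_le_factorial_rpow_neg (hα1 : α 1 = 1/6)
    (hαrec : ∀ j ≥ 2, α j = (4 / ((5:ℝ)^j - 5)) * ∑ ℓ ∈ Ico 1 j, α (j - ℓ) * α ℓ) :
    ∀ j, 1 ≤ j → α j ≤ (j ! : ℝ) ^ (-Real.logb 2 5) / 6 := by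
  set β : ℕ → ℝ := fun j ↦ (j ! : ℝ) ^ (-Real.logb 2 5)
  intro j
  induction j using Nat.strong_induction_on with
  | _ j ih =>
    intro hj
    rcases hj.eq_or_lt with rfl | hj2
    · norm_num [hα1]
    have h25 : (25 : ℝ) ≤ 5 ^ j :=
      (by norm_num : (25 : ℝ) ≤ 5 ^ 2).trans (pow_le_pow_right₀ (by norm_num) hj2)
    have h5 : (0 : ℝ) < 5 ^ j - 5 := by linarith
    have hβj : 0 < β j := by positivity
    calc α j = 4 / ((5:ℝ)^j - 5) * ∑ ℓ ∈ Ico 1 j, α (j - ℓ) * α ℓ := hαrec j hj2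
      _ ≤ 4 / ((5:ℝ)^j - 5) * ∑ ℓ ∈ Ico 1 j, β (j - ℓ) / 6 * (β ℓ / 6) := by
          gcongr 4 / _ * ?_
          refine sum_le_sum fun ℓ hℓ ↦ ?_
          rw [mem_Ico] at hℓ
          exact mul_le_mul (ih _ (by omega) (by omega)) (ih _ hℓ.2 hℓ.1)
            (alpha_pos hα1 hαrec ℓ hℓ.1).le (by positivity)
      _ = 4 / ((5:ℝ)^j - 5) * ((∑ ℓ ∈ Ico 1 j, β (j - ℓ) * β ℓ) / 36) := by
          rw [sum_div]
          congr 1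
          exact sum_congr rfl fun _ _ ↦ by ring
      _ ≤ 4 / ((5:ℝ)^j - 5) * (5 ^ j * β j / 36) := by
          gcongr
          rw [← two_pow_rpow_logb_two_five]
          exact sum_Ico_factorial_rpow_neg_mul_le one_le_logb_two_five j
      _ ≤ β j / 6 := by
          rw [div_mul_eq_mul_div, div_le_div_iff₀ h5 (by norm_num)]
          nlinarith

end Recurrence

theorem alpha_bound (α : ℕ → ℝ) (hα0 : α 0 = 1) (hα1 : α 1 = 1/6)
    (hαrec : ∀ j ≥ 2, α j = (4 / ((5:ℝ)^j - 5)) * ∑ ℓ ∈ Finset.Ico 1 j, α (j - ℓ) * α ℓ) :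
    ∃ c > 0, ∀ j, 0 < α j ∧ α j ≤ c * (Nat.factorial j : ℝ) ^ (-(Real.log 5 / Real.log 2)) := by
  refine ⟨1, one_pos, fun j ↦ ?_⟩
  rw [one_mul, Real.log_div_log]
  rcases Nat.eq_zero_or_pos j with rfl | hj
  · norm_num [hα0]
  have hle := alpha_le_factorial_rpow_neg hα1 hαrec j hj
  have hβ : (0 : ℝ) < (j ! : ℝ) ^ (-Real.logb 2 5) := by positivity
  exact ⟨alpha_pos hα1 hαrec j hj, by linarith⟩
end

section
/- Let r = log 5 / log 2. There exists a constant M > 0 such that for all j ≥ 2, Σ_{ℓ=1}^{j-1} (binomial(j, ℓ))^r ≤ M · 5^j · j^{-1/2}. -/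
/-!
Split `C(j,ℓ)^r = C(j,ℓ)^2 · C(j,ℓ)^(r-2)` and bound the second factor by `(2^j)^(r-2) = (5/4)^j`,
using `2^r = 5`. What remains is `∑ C(j,ℓ)^2 = C(2j,j) ≤ 4^j/√j`; the last bound comes from the
induction `C(2n,n)^2 (3n+1) ≤ 16^n`, whose step is the polynomial inequality
`(2n+1)^2 (3n+4) ≤ 4 (n+1)^2 (3n+1)`.
-/

open Finset Real

theorem Real.rpow_le_rpow_mul_rpow_sub {x y s r : ℝ} (hx : 0 < x) (hxy : x ≤ y) (hsr : s ≤ r) :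
    x ^ r ≤ x ^ s * y ^ (r - s) := by
  calc x ^ r = x ^ s * x ^ (r - s) := by rw [← rpow_add hx, add_sub_cancel]
    _ ≤ x ^ s * y ^ (r - s) := by gcongr

namespace Nat

theorem centralBinom_sq_mul_le (n : ℕ) : n.centralBinom ^ 2 * (3 * n + 1) ≤ 16 ^ n := by
  induction n with
  | zero => simp
  | succ n ih =>
    have hstep := succ_mul_centralBinom_succ n
    have hpoly : (2 * n + 1) ^ 2 * (3 * n + 4) ≤ 4 * ((n + 1) ^ 2 * (3 * n + 1)) := by
      ring_nf; omega
    refine Nat.le_of_mul_le_mul_left ?_ (by positivity : 0 < (n + 1) ^ 2 * (3 * n + 1))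
    calc (n + 1) ^ 2 * (3 * n + 1) * ((n + 1).centralBinom ^ 2 * (3 * (n + 1) + 1))
        = ((n + 1) * (n + 1).centralBinom) ^ 2 * (3 * n + 4) * (3 * n + 1) := by ring
      _ = 4 * ((2 * n + 1) ^ 2 * (3 * n + 4)) * (n.centralBinom ^ 2 * (3 * n + 1)) := by
        rw [hstep]; ring
      _ ≤ 4 * (4 * ((n + 1) ^ 2 * (3 * n + 1))) * 16 ^ n := by gcongr
      _ = (n + 1) ^ 2 * (3 * n + 1) * 16 ^ (n + 1) := by ring

theorem centralBinom_le_four_pow_mul_rpow_neg_half {n : ℕ} (hn : 0 < n) :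
    (n.centralBinom : ℝ) ≤ 4 ^ n * (n : ℝ) ^ (-(1 / 2) : ℝ) := by
  have hn' : (0 : ℝ) < n := by exact_mod_cast hn
  have hsq : ((n.centralBinom : ℝ) * √n) ^ 2 ≤ ((4 : ℝ) ^ n) ^ 2 := by
    rw [mul_pow, sq_sqrt hn'.le, ← pow_mul, mul_comm n, pow_mul]
    calc (n.centralBinom : ℝ) ^ 2 * n ≤ n.centralBinom ^ 2 * (3 * n + 1) := by gcongr; linarith
      _ ≤ 16 ^ n := by exact_mod_cast centralBinom_sq_mul_le n
      _ = (4 ^ 2) ^ n := by norm_num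
  rw [rpow_neg hn'.le, ← sqrt_eq_rpow, ← div_eq_mul_inv, le_div_iff₀ (Real.sqrt_pos.2 hn')]
  exact (pow_le_pow_iff_left₀ (by positivity) (by positivity) two_ne_zero).1 hsq

theorem sum_range_choose_rpow_le {r : ℝ} (hr : 2 ≤ r) (n : ℕ) :
    ∑ i ∈ range (n + 1), (n.choose i : ℝ) ^ r ≤ ((2 : ℝ) ^ (r - 2)) ^ n * n.centralBinom := by
  calc ∑ i ∈ range (n + 1), (n.choose i : ℝ) ^ r
      ≤ ∑ i ∈ range (n + 1), (n.choose i : ℝ) ^ (2 : ℝ) * ((2 : ℝ) ^ n) ^ (r - 2) := by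
        refine sum_le_sum fun i hi => ?_
        have hpos : 0 < n.choose i := choose_pos (mem_range_succ_iff.1 hi)
        exact rpow_le_rpow_mul_rpow_sub (by exact_mod_cast hpos)
          (by exact_mod_cast choose_le_two_pow n i) hr
    _ = ((2 : ℝ) ^ (r - 2)) ^ n * n.centralBinom := by
        simp_rw [rpow_two, ← sum_mul, ← rpow_pow_comm zero_le_two, centralBinom_eq_two_mul_choose,
          ← sum_range_choose_sq]
        push_cast
        ring

end Nat

theorem binom_power_sum_bound :
    ∃ M > 0, ∀ j : ℕ, 2 ≤ j →
      ∑ ℓ ∈ Finset.Ico 1 j, ((j.choose ℓ : ℝ)) ^ (Real.log 5 / Real.log 2)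
        ≤ M * 5 ^ j * (j : ℝ) ^ (-(1/2) : ℝ) := by
  set r := Real.log 5 / Real.log 2
  have h2r : (2 : ℝ) ^ r = 5 := rpow_logb two_pos (by norm_num) (by norm_num)
  have hr : 2 ≤ r := (rpow_le_rpow_left_iff one_lt_two).1 (by rw [h2r]; norm_num)
  have hbase : (2 : ℝ) ^ (r - 2) = 5 / 4 := by rw [rpow_sub two_pos, h2r]; norm_num
  refine ⟨1, one_pos, fun j hj => ?_⟩
  calc ∑ ℓ ∈ Ico 1 j, (j.choose ℓ : ℝ) ^ r ≤ ∑ ℓ ∈ range (j + 1), (j.choose ℓ : ℝ) ^ r :=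
        sum_le_sum_of_subset_of_nonneg (fun ℓ hℓ => by simp at hℓ ⊢; omega)
          (fun _ _ _ => by positivity)
    _ ≤ ((2 : ℝ) ^ (r - 2)) ^ j * j.centralBinom := Nat.sum_range_choose_rpow_le hr j
    _ ≤ (5 / 4) ^ j * (4 ^ j * (j : ℝ) ^ (-(1 / 2) : ℝ)) := by
        rw [hbase]
        gcongr
        exact Nat.centralBinom_le_four_pow_mul_rpow_neg_half (by omega)
    _ = 1 * 5 ^ j * (j : ℝ) ^ (-(1 / 2) : ℝ) := by
        rw [div_pow, ← mul_assoc, div_mul_cancel₀ _ (by positivity)]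
        ring
end

section
/- Define sequences (α_j) and (γ_j) by α_0 = 1, α_1 = 1/6, α_j = (4/(5^j-5)) Σ_{ℓ=1}^{j-1} α_{j-ℓ}α_ℓ for j ≥ 2, and γ_0 = 1/2, γ_j = (4/(5^{j+1}-5)) Σ_{ℓ=0}^{j-1} α_{j-ℓ}γ_ℓ for j ≥ 1. Then γ_j = 3 α_{j+1} for all j ≥ 0. -/
/-! Strong induction on `j`: once `γ ℓ = 3 α (ℓ + 1)` is known for `ℓ < j`, the sum defining
`γ j` is, after the shift `ℓ ↦ ℓ + 1`, three times the sum defining `α (j + 1)`, and the normalising factors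
`4 / (5 ^ (j + 1) - 5)` coincide. -/

open Finset

theorem sum_Ico_one_sub_eq_sum_range {M : Type*} [AddCommMonoid M] (f : ℕ → ℕ → M) (n : ℕ) :
    ∑ ℓ ∈ Ico 1 (n + 1), f (n + 1 - ℓ) ℓ = ∑ ℓ ∈ range n, f (n - ℓ) (ℓ + 1) := by
  rw [sum_Ico_eq_sum_range, Nat.add_sub_cancel]
  refine sum_congr rfl fun ℓ _ => ?_
  rw [show n + 1 - (1 + ℓ) = n - ℓ by omega, add_comm 1 ℓ]

theorem gamma_eq_three_alpha_general (α : ℕ → ℝ) (hα1 : α 1 = 1/6)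
    (hαrec : ∀ j ≥ 2, α j = (4 / ((5:ℝ)^j - 5)) * ∑ ℓ ∈ Finset.Ico 1 j, α (j - ℓ) * α ℓ)
    (γ : ℕ → ℝ) (hγ0 : γ 0 = 1/2)
    (hγrec : ∀ j ≥ 1, γ j = (4 / ((5:ℝ)^(j+1) - 5)) * ∑ ℓ ∈ Finset.range j, α (j - ℓ) * γ ℓ) :
    ∀ j, γ j = 3 * α (j + 1) := by
  intro j
  induction j using Nat.strong_induction_on with
  | _ j ih =>
    cases j with
    | zero => rw [hγ0, hα1]; norm_num
    | succ n =>
      have hsum : ∑ ℓ ∈ range (n + 1), α (n + 1 - ℓ) * γ ℓ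
          = 3 * ∑ ℓ ∈ Ico 1 (n + 2), α (n + 2 - ℓ) * α ℓ := by
        rw [sum_Ico_one_sub_eq_sum_range (fun a b => α a * α b), mul_sum]
        refine sum_congr rfl fun ℓ hℓ => ?_
        rw [ih ℓ (mem_range.mp hℓ)]
        ring
      rw [hγrec (n + 1) n.succ_pos, hαrec (n + 2) (by omega), hsum]
      ring

theorem gamma_eq_three_alpha (α : ℕ → ℝ) (hα0 : α 0 = 1) (hα1 : α 1 = 1/6)
    (hαrec : ∀ j ≥ 2, α j = (4 / ((5:ℝ)^j - 5)) * ∑ ℓ ∈ Finset.Ico 1 j, α (j - ℓ) * α ℓ)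
    (γ : ℕ → ℝ) (hγ0 : γ 0 = 1/2)
    (hγrec : ∀ j ≥ 1, γ j = (4 / ((5:ℝ)^(j+1) - 5)) * ∑ ℓ ∈ Finset.range j, α (j - ℓ) * γ ℓ) :
    ∀ j, γ j = 3 * α (j + 1) :=
  gamma_eq_three_alpha_general α hα1 hαrec γ hγ0 hγrec
end

section
/- Let λ < 0 be real and let (λ_n)_{n∈ℤ} be a sequence of negative reals satisfying λ_{n-1} = λ_n(5 - λ_n) for all n, and lim_{n→∞} (3/2)·5^n·λ_n = λ. Then such a sequence is unique: if (μ_n) is another sequence of negative reals with μ_{n-1} = μ_n(5 - μ_n) and lim_{n→∞} (3/2)·5^n·μ_n = λ, then λ_n = μ_n for all n. -/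
theorem decimation_sequence_unique (lam : ℝ) (hlam : lam < 0)
    (L M : ℤ → ℝ)
    (hLneg : ∀ n, L n < 0) (hLrec : ∀ n, L (n - 1) = L n * (5 - L n))
    (hLlim : Filter.Tendsto (fun n : ℕ => (3/2 : ℝ) * 5 ^ n * L n) Filter.atTop (nhds lam))
    (hMneg : ∀ n, M n < 0) (hMrec : ∀ n, M (n - 1) = M n * (5 - M n))
    (hMlim : Filter.Tendsto (fun n : ℕ => (3/2 : ℝ) * 5 ^ n * M n) Filter.atTop (nhds lam)) :
    ∀ n, L n = M n := by
  -- telescoping identity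
  have key : ∀ (m : ℤ) (k : ℕ), L m - M m =
      (L (m + k) - M (m + k)) *
        ∏ i ∈ Finset.range k, (5 - L (m + i + 1) - M (m + i + 1)) := by
    intro m k
    induction k with
    | zero => simp
    | succ k ih =>
      have hl := hLrec (m + (k : ℤ) + 1)
      have hm := hMrec (m + (k : ℤ) + 1)
      rw [show (m + (k:ℤ) + 1) - 1 = m + (k:ℤ) by ring] at hl hm
      rw [Finset.prod_range_succ, ih, hl, hm,
        show (m + ((k+1:ℕ):ℤ)) = m + (k:ℤ) + 1 by push_cast; ring]
      ring
  -- positivity of the products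
  have hprodpos : ∀ (m : ℤ) (k : ℕ),
      0 < ∏ i ∈ Finset.range k, (5 - L (m + i + 1) - M (m + i + 1)) := by
    intro m k
    apply Finset.prod_pos
    intro i _
    have h1 := hLneg (m + i + 1); have h2 := hMneg (m + i + 1); linarith
  -- boundedness of 5^n * (|L n| + |M n|)
  obtain ⟨A, hA⟩ := hLlim.abs.bddAbove_range
  obtain ⟨B, hB⟩ := hMlim.abs.bddAbove_range
  have hAbd : ∀ n : ℕ, (5:ℝ)^n * |L n| ≤ 2/3 * A := by
    intro n
    have := hA (Set.mem_range_self n)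
    simp only [abs_mul] at this
    rw [abs_of_nonneg (by positivity : (0:ℝ) ≤ (3/2:ℝ)),
      abs_of_nonneg (by positivity : (0:ℝ) ≤ (5:ℝ)^n)] at this
    linarith
  have hBbd : ∀ n : ℕ, (5:ℝ)^n * |M n| ≤ 2/3 * B := by
    intro n
    have := hB (Set.mem_range_self n)
    simp only [abs_mul] at this
    rw [abs_of_nonneg (by positivity : (0:ℝ) ≤ (3/2:ℝ)),
      abs_of_nonneg (by positivity : (0:ℝ) ≤ (5:ℝ)^n)] at this
    linarith
  obtain ⟨c, hc0, hcb⟩ : ∃ c : ℝ, 0 ≤ c ∧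
      ∀ n : ℕ, |L ((n:ℕ):ℤ)| + |M ((n:ℕ):ℤ)| ≤ c * (1/5)^n := by
    refine ⟨2/3 * A + 2/3 * B, ?_, ?_⟩
    · have h1 := hAbd 0; have h2 := hBbd 0
      simp only [pow_zero, one_mul] at h1 h2
      have h3 : (0:ℝ) ≤ 2/3 * A := le_trans (abs_nonneg _) h1
      have h4 : (0:ℝ) ≤ 2/3 * B := le_trans (abs_nonneg _) h2
      linarith
    · intro n
      have h1 := hAbd n; have h2 := hBbd n
      rw [div_pow, one_pow, mul_one_div, le_div_iff₀ (by positivity : (0:ℝ) < 5^n)]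
      nlinarith
  -- bound on each factor
  have hfac : ∀ i : ℕ, 5 - L ((0:ℤ) + i + 1) - M ((0:ℤ) + i + 1) ≤
      5 * Real.exp (c * (1/5)^(i+1)) := by
    intro i
    have hcast : ((0:ℤ) + (i:ℤ) + 1) = (((i+1 : ℕ)):ℤ) := by push_cast; ring
    have hb := hcb (i+1)
    rw [← hcast] at hb
    have h1 := neg_abs_le (L ((0:ℤ) + i + 1))
    have h2 := neg_abs_le (M ((0:ℤ) + i + 1))
    have hx : (0:ℝ) ≤ c * (1/5)^(i+1) := by positivity
    have hexp := Real.add_one_le_exp (c * (1/5)^(i+1))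
    nlinarith
  -- geometric sum bound
  have hsum : ∀ k : ℕ, ∑ i ∈ Finset.range k, c * (1/5:ℝ)^(i+1) ≤ c := by
    intro k
    have hgeo : ∑ i ∈ Finset.range k, ((1:ℝ)/5)^(i+1) = (1 - (1/5)^k)/4 := by
      induction k with
      | zero => simp
      | succ k ih => rw [Finset.sum_range_succ, ih, pow_succ]; ring
    rw [← Finset.mul_sum, hgeo]
    have : (0:ℝ) ≤ (1/5:ℝ)^k := by positivity
    have h1 : (1 - (1/5:ℝ)^k)/4 ≤ 1 := by linarith
    nlinarith
  -- product bound
  have hprodbd : ∀ k : ℕ,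
      ∏ i ∈ Finset.range k, (5 - L ((0:ℤ) + i + 1) - M ((0:ℤ) + i + 1)) ≤
        5^k * Real.exp c := by
    intro k
    have step1 : ∏ i ∈ Finset.range k, (5 - L ((0:ℤ) + i + 1) - M ((0:ℤ) + i + 1)) ≤
        ∏ i ∈ Finset.range k, (5 * Real.exp (c * (1/5)^(i+1))) := by
      apply Finset.prod_le_prod
      · intro i _
        have h1 := hLneg ((0:ℤ) + i + 1); have h2 := hMneg ((0:ℤ) + i + 1); linarith
      · intro i _; exact hfac i
    refine step1.trans ?_
    rw [Finset.prod_mul_distrib, Finset.prod_const, Finset.card_range, ← Real.exp_sum]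
    have := hsum k
    have := Real.exp_le_exp.mpr (hsum k)
    have h5 : (0:ℝ) ≤ 5^k := by positivity
    calc (5:ℝ)^k * Real.exp (∑ i ∈ Finset.range k, c * (1/5)^(i+1))
        ≤ 5^k * Real.exp c := by
          apply mul_le_mul_of_nonneg_left _ h5
          exact Real.exp_le_exp.mpr (hsum k)
      _ = 5^k * Real.exp c := rfl
  -- main estimate at 0
  have main : ∀ k : ℕ, |L 0 - M 0| ≤ Real.exp c * ((5:ℝ)^k * |L ((k:ℕ):ℤ) - M ((k:ℕ):ℤ)|) := by
    intro k
    have hk := key 0 k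
    rw [zero_add] at hk
    have hp := hprodpos 0 k
    calc |L 0 - M 0| = |L ((k:ℕ):ℤ) - M ((k:ℕ):ℤ)| *
          (∏ i ∈ Finset.range k, (5 - L ((0:ℤ) + i + 1) - M ((0:ℤ) + i + 1))) := by
          rw [hk, abs_mul, abs_of_pos (hprodpos 0 k)]
      _ ≤ |L ((k:ℕ):ℤ) - M ((k:ℕ):ℤ)| * (5^k * Real.exp c) := by
          apply mul_le_mul_of_nonneg_left (hprodbd k) (abs_nonneg _)
      _ = Real.exp c * ((5:ℝ)^k * |L ((k:ℕ):ℤ) - M ((k:ℕ):ℤ)|) := by ring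
  -- the right-hand side tends to 0
  have htend : Filter.Tendsto
      (fun k : ℕ => Real.exp c * ((5:ℝ)^k * |L ((k:ℕ):ℤ) - M ((k:ℕ):ℤ)|))
      Filter.atTop (nhds 0) := by
    have hdiff := hLlim.sub hMlim
    rw [sub_self] at hdiff
    have habs := hdiff.abs
    rw [abs_zero] at habs
    have := habs.const_mul (Real.exp c * (2/3))
    rw [mul_zero] at this
    refine this.congr ?_
    intro k
    have h5 : (0:ℝ) < (3/2:ℝ) * 5^k := by positivity
    show Real.exp c * (2/3) * |3/2 * 5^k * L (k:ℤ) - 3/2 * 5^k * M (k:ℤ)| = _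
    rw [show (3/2:ℝ) * 5^k * L (k:ℤ) - 3/2 * 5^k * M (k:ℤ)
        = (3/2 * 5^k) * (L (k:ℤ) - M (k:ℤ)) by ring,
      abs_mul, abs_of_pos h5]
    ring
  have h00 : L 0 = M 0 := by
    have hle : |L 0 - M 0| ≤ 0 := ge_of_tendsto' htend main
    have := abs_nonneg (L 0 - M 0)
    have : L 0 - M 0 = 0 := abs_eq_zero.mp (le_antisymm hle (abs_nonneg _))
    linarith
  -- conclude for all n
  intro n
  rcases le_or_gt n 0 with h | h
  · have hk : n + (((-n).toNat : ℕ) : ℤ) = 0 := by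
      rw [Int.toNat_of_nonneg (by linarith : 0 ≤ -n)]; ring
    have h2 := key n (-n).toNat
    rw [hk, h00, sub_self, zero_mul] at h2
    linarith
  · have hk : (0:ℤ) + ((n.toNat : ℕ) : ℤ) = n := by
      rw [Int.toNat_of_nonneg h.le]; ring
    have h2 := key 0 n.toNat
    rw [hk, h00, sub_self] at h2
    have hp := hprodpos 0 n.toNat
    rcases mul_eq_zero.mp h2.symm with hx | hx
    · linarith
    · exact absurd hx (ne_of_gt hp)
end

section
/- Let (λ_n)_{n∈ℤ} be a sequence of negative reals with λ_{n-1} = λ_n(5 - λ_n) and λ_n → -∞ as n → -∞. With c_n = 1 - λ_n/4 and s_n = (-λ_n/4)·Π_{k=0}^∞ (1 + 4/(2 - λ_{n-k})), we have lim_{n→-∞} s_n / c_n = 1. -/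
/-!
The quotient is `(-λ_n/4) / (1 - λ_n/4) → 1` times the product. Since
`λ_{n-1} = 5λ_n - λ_n² ≤ 5λ_n`, we get `λ_{n-k} ≤ 5^k λ_n`, so for `n` near `-∞` the `k`-th factor
differs from `1` by at most `4 · 5^{-k}`, while each factor tends to `1`; dominated convergence
for infinite products then sends the product to `1`.
-/

open Filter Topology

theorem le_pow_mul_of_forall_sub_one_le {L : ℤ → ℝ} {r : ℝ} (hr : 0 ≤ r)
    (h : ∀ n, L (n - 1) ≤ r * L n) (n : ℤ) (k : ℕ) : L (n - k) ≤ r ^ k * L n := by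
  induction k with
  | zero => simp
  | succ k ih =>
    calc L (n - (k + 1 : ℕ)) = L (n - k - 1) := by push_cast; ring_nf
      _ ≤ r * L (n - k) := h _
      _ ≤ r * (r ^ k * L n) := mul_le_mul_of_nonneg_left ih hr
      _ = r ^ (k + 1) * L n := by ring

theorem tendsto_tprod_one_add_div_sub_atBot {L : ℤ → ℝ} {r : ℝ} (hr : 1 < r)
    (h : ∀ n, L (n - 1) ≤ r * L n) (hL : Tendsto L atBot atBot) (c d : ℝ) :
    Tendsto (fun n => ∏' k : ℕ, (1 + c / (d - L (n - k)))) atBot (𝓝 1) := by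
  have hsum : Summable fun k : ℕ => |c| * r⁻¹ ^ k :=
    (summable_geometric_of_lt_one (by positivity) (inv_lt_one_of_one_lt₀ hr)).mul_left _
  have hfactor (k : ℕ) : Tendsto (fun n : ℤ => c / (d - L (n - k))) atBot (𝓝 0) := by
    have hshift : Tendsto (fun n : ℤ => L (n - k)) atBot atBot :=
      hL.comp (tendsto_atBot_add_const_right _ _ tendsto_id)
    exact tendsto_const_nhds.div_atTop
      (tendsto_atTop_add_const_left _ d (tendsto_neg_atBot_atTop.comp hshift))
  have hbound : ∀ᶠ n in atBot, ∀ k : ℕ, ‖c / (d - L (n - k))‖ ≤ |c| * r⁻¹ ^ k := by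
    filter_upwards [hL.eventually_le_atBot (-(|d| + 1))] with n hn k
    have hrk : 1 ≤ r ^ k := one_le_pow₀ hr.le
    have hdecay := le_pow_mul_of_forall_sub_one_le (by linarith) h n k
    have hden : r ^ k ≤ d - L (n - k) := by
      nlinarith [neg_abs_le d, mul_le_mul_of_nonneg_left hn (by linarith : (0 : ℝ) ≤ r ^ k),
        mul_nonneg (sub_nonneg.2 hrk) (abs_nonneg d)]
    rw [norm_div, Real.norm_eq_abs, Real.norm_eq_abs, abs_of_pos (a := d - L (n - k)) (by linarith),
      inv_pow, ← div_eq_mul_inv]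
    exact div_le_div_of_nonneg_left (abs_nonneg c) (by positivity) hden
  simpa using tendsto_tprod_one_add_of_dominated_convergence (g := 0) hsum hfactor hbound

theorem tendsto_div_one_add_atTop : Tendsto (fun t : ℝ => t / (1 + t)) atTop (𝓝 1) := by
  have hinv : Tendsto (fun t : ℝ => 1 - (1 + t)⁻¹) atTop (𝓝 1) := by
    simpa using (tendsto_inv_atTop_zero.comp
      (tendsto_atTop_add_const_left _ 1 tendsto_id)).const_sub (1 : ℝ)
  refine hinv.congr' ?_
  filter_upwards [eventually_gt_atTop 0] with t ht
  field_simp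
  ring

theorem s_over_c_tendsto_one_general (L : ℤ → ℝ)
    (hLrec : ∀ n, L (n - 1) = L n * (5 - L n))
    (hLbot : Filter.Tendsto L Filter.atBot Filter.atBot) :
    Filter.Tendsto
      (fun n : ℤ =>
        ((-(L n) / 4) * ∏' k : ℕ, (1 + 4 / (2 - L (n - k)))) / (1 - L n / 4))
      Filter.atBot (nhds 1) := by
  have hdecay (n : ℤ) : L (n - 1) ≤ 5 * L n := by nlinarith [hLrec n, sq_nonneg (L n)]
  have hprod := tendsto_tprod_one_add_div_sub_atBot (by norm_num) hdecay hLbot 4 2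
  have hratio : Tendsto (fun n => (-(L n) / 4) / (1 - L n / 4)) atBot (𝓝 1) := by
    refine (tendsto_div_one_add_atTop.comp
      ((tendsto_neg_atBot_atTop.comp hLbot).atTop_div_const (by norm_num : (0 : ℝ) < 4))).congr fun n => ?_
    simp only [Function.comp_apply]
    ring
  simpa only [mul_div_right_comm, one_mul] using hratio.mul hprod

theorem s_over_c_tendsto_one (L : ℤ → ℝ) (hLneg : ∀ n, L n < 0)
    (hLrec : ∀ n, L (n - 1) = L n * (5 - L n))
    (hLbot : Filter.Tendsto L Filter.atBot Filter.atBot) :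
    Filter.Tendsto
      (fun n : ℤ =>
        ((-(L n) / 4) * ∏' k : ℕ, (1 + 4 / (2 - L (n - k)))) / (1 - L n / 4))
      Filter.atBot (nhds 1) :=
  s_over_c_tendsto_one_general L hLrec hLbot
end

section
/- Let (λ_n)_{n∈ℤ} be a sequence of negative reals with λ_{n-1} = λ_n(5 - λ_n) and λ_n → -∞ as n → -∞. Define c_n = 1 - λ_n/4, s_n = (-λ_n/4)·Π_{k=0}^∞ (1 + 4/(2 - λ_{n-k})), and e_n = c_n - s_n. Then lim_{n→-∞} λ_n · e_n = -1. -/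
/-!
Write `x k = 4 / (2 - λ_{n-k})`, so that `λ_n e_n = λ_n (1 - λ_n / 4) + λ_n² / 4 · ∏ (1 + x k)`.
The recursion gives `λ_{n-k} ≤ 5^k λ_n` and `λ_{n-2} ≤ -λ_n⁴`, so the product over `k ≥ 2`
is `1 + O(λ_n⁻⁴)` and is negligible even after multiplication by `λ_n²`. What remains is an
explicit rational function of `λ_n` whose limit is `-2 + 1 = -1`: the factor `k = 0`
contributes `-2` and the factor `k = 1` contributes `1`.
-/

open Filter Topology Real

theorem tprod_one_add_le_exp_tsum {ι : Type*} {f : ι → ℝ} (hf : ∀ i, 0 ≤ f i)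
    (hs : Summable f) : ∏' i, (1 + f i) ≤ exp (∑' i, f i) :=
  tprod_le_of_prod_le' (one_le_exp (tsum_nonneg hf)) fun s =>
    (prod_one_add_le_exp_sum s hf).trans (exp_le_exp.2 (hs.sum_le_tsum s fun i _ => hf i))

theorem tprod_one_add_sub_one_le_two_mul_tsum {ι : Type*} {f : ι → ℝ} (hf : ∀ i, 0 ≤ f i)
    (hs : Summable f) (h1 : ∑' i, f i ≤ 1) : ∏' i, (1 + f i) - 1 ≤ 2 * ∑' i, f i := by
  have h0 : 0 ≤ ∑' i, f i := tsum_nonneg hf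
  have hexp := abs_exp_sub_one_le (x := ∑' i, f i) (by rwa [abs_of_nonneg h0])
  rw [abs_of_nonneg h0] at hexp
  linarith [tprod_one_add_le_exp_tsum hf hs, le_abs_self (exp (∑' i, f i) - 1)]

theorem one_le_tprod_of_one_le₀ {ι : Type*} {f : ι → ℝ} (hf : ∀ i, 1 ≤ f i) :
    1 ≤ ∏' i, f i := by
  by_cases h : Multipliable f
  · exact ge_of_tendsto' h.hasProd fun s => Finset.one_le_prod fun i _ => hf i
  · rw [tprod_eq_one_of_not_multipliable h]

theorem tendsto_lambda_mul_e_truncated :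
    Tendsto (fun y : ℝ => y * (1 - y / 4)
      + y ^ 2 / 4 * ((1 + 4 / (2 - y)) * (1 + 4 / (2 - y * (5 - y))))) atBot (𝓝 (-1)) := by
  -- In the variable `u = y⁻¹` the expression is a rational function, continuous at `0`.
  set φ : ℝ → ℝ := fun u => 2 / (2 * u - 1) + 1 / (2 * u ^ 2 - 5 * u + 1)
    + 4 * u / ((2 * u - 1) * (2 * u ^ 2 - 5 * u + 1))
  have hφ : Tendsto (fun y : ℝ => φ y⁻¹) atBot (𝓝 (-1)) := by
    have hcont : ContinuousAt φ 0 := by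
      refine ((ContinuousAt.div ?_ ?_ ?_).add (ContinuousAt.div ?_ ?_ ?_)).add
        (ContinuousAt.div ?_ ?_ ?_) <;> first | fun_prop | norm_num
    have h0 : φ 0 = -1 := by norm_num [φ]
    have h := hcont.tendsto.comp tendsto_inv_atBot_zero
    rwa [h0] at h
  refine hφ.congr' <| (eventually_lt_atBot 0).mono fun y hy => ?_
  have h0 : y ≠ 0 := hy.ne
  have h1 : 2 - y ≠ 0 := by linarith
  have h2 : 2 - y * (5 - y) ≠ 0 := by nlinarith
  simp only [φ]
  rw [show 2 * y⁻¹ - 1 = (2 - y) / y by field_simp,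
    show 2 * y⁻¹ ^ 2 - 5 * y⁻¹ + 1 = (2 - y * (5 - y)) / y ^ 2 by field_simp; ring]
  field_simp
  ring

structure IsNegSpectralDecimation (L : ℤ → ℝ) : Prop where
  neg : ∀ n, L n < 0
  sub_one : ∀ n, L (n - 1) = L n * (5 - L n)

-- `1 + prodTerm L n k` is the `k`-th factor of the infinite product in `s_n`.
noncomputable def prodTerm (L : ℤ → ℝ) (m : ℤ) (k : ℕ) : ℝ := 4 / (2 - L (m - k))

theorem tendsto_prodTerm {L : ℤ → ℝ} (hLbot : Tendsto L atBot atBot) (k : ℕ) :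
    Tendsto (fun n => prodTerm L n k) atBot (𝓝 0) :=
  tendsto_const_nhds.div_atTop <| tendsto_atTop_add_const_left _ _ <|
    tendsto_neg_atBot_atTop.comp <| hLbot.comp <| tendsto_atBot_add_const_right _ _ tendsto_id

namespace IsNegSpectralDecimation

variable {L : ℤ → ℝ}

theorem le_pow_mul (hL : IsNegSpectralDecimation L) (m : ℤ) (k : ℕ) :
    L (m - k) ≤ 5 ^ k * L m := by
  induction k with
  | zero => simp
  | succ k ih =>
    have hstep : L (m - (k + 1 : ℕ)) = L (m - k) * (5 - L (m - k)) := by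
      rw [← hL.sub_one]; push_cast; ring_nf
    rw [hstep, pow_succ]
    nlinarith [hL.neg (m - k)]

theorem sub_one_le_neg_sq (hL : IsNegSpectralDecimation L) (n : ℤ) :
    L (n - 1) ≤ -L n ^ 2 := by
  rw [hL.sub_one]; nlinarith [hL.neg n]

theorem sub_two_le_neg_pow_four (hL : IsNegSpectralDecimation L) (n : ℤ) :
    L (n - 2) ≤ -L n ^ 4 := by
  have h1 := hL.sub_one_le_neg_sq n
  have h2 := hL.sub_one_le_neg_sq (n - 1)
  rw [show n - 1 - 1 = n - 2 by ring] at h2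
  nlinarith [sq_nonneg (L n)]

theorem prodTerm_nonneg (hL : IsNegSpectralDecimation L) (m : ℤ) (k : ℕ) :
    0 ≤ prodTerm L m k :=
  div_nonneg (by norm_num) (by linarith [hL.neg (m - k)])

theorem prodTerm_le_geometric (hL : IsNegSpectralDecimation L) (m : ℤ) (k : ℕ) :
    prodTerm L m k ≤ 4 / -L m * (1 / 5) ^ k := by
  have hm := hL.neg m
  have hk := hL.le_pow_mul m k
  rw [div_pow, one_pow, div_mul_div_comm, mul_one, prodTerm]
  gcongr
  · exact mul_pos (neg_pos.2 hm) (by positivity)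
  · nlinarith

theorem summable_prodTerm (hL : IsNegSpectralDecimation L) (m : ℤ) :
    Summable (prodTerm L m) :=
  Summable.of_nonneg_of_le (hL.prodTerm_nonneg m) (hL.prodTerm_le_geometric m)
    ((summable_geometric_of_lt_one (by norm_num) (by norm_num)).mul_left _)

theorem tsum_prodTerm_le (hL : IsNegSpectralDecimation L) (m : ℤ) :
    ∑' k, prodTerm L m k ≤ 5 / -L m := by
  have hgeom := (summable_geometric_of_lt_one (r := 1 / 5) (by norm_num) (by norm_num))
  calc ∑' k, prodTerm L m k ≤ ∑' k : ℕ, 4 / -L m * (1 / 5) ^ k :=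
        (hL.summable_prodTerm m).tsum_le_tsum (hL.prodTerm_le_geometric m) (hgeom.mul_left _)
    _ = 5 / -L m := by
        rw [tsum_mul_left, tsum_geometric_of_lt_one (by norm_num) (by norm_num)]; ring

theorem tprod_one_add_prodTerm (hL : IsNegSpectralDecimation L) (n : ℤ) :
    ∏' k, (1 + prodTerm L n k)
      = (1 + prodTerm L n 0) * (1 + prodTerm L n 1) * ∏' k, (1 + prodTerm L (n - 2) k) := by
  have hshift : (fun k : ℕ => 1 + prodTerm L (n - 2) k) = fun k => 1 + prodTerm L n (k + 2) := by
    ext k; rw [prodTerm, prodTerm]; push_cast; ring_nf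
  have hmul : Multipliable fun k => 1 + prodTerm L n (k + 2) := by
    rw [← hshift]; exact Real.multipliable_one_add_of_summable (hL.summable_prodTerm (n - 2))
  rw [hshift, ← Multipliable.prod_mul_tprod_nat_mul' (f := fun k => 1 + prodTerm L n k) hmul,
    Finset.prod_range_succ, Finset.prod_range_one]

theorem tprod_one_add_prodTerm_sub_one_le (hL : IsNegSpectralDecimation L) {m : ℤ}
    (hm : L m ≤ -5) : ∏' k, (1 + prodTerm L m k) - 1 ≤ 10 / -L m := by
  have hsum := hL.tsum_prodTerm_le m
  have h1 : ∑' k, prodTerm L m k ≤ 1 :=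
    hsum.trans ((div_le_one (by linarith)).2 (by linarith))
  calc _ ≤ 2 * ∑' k, prodTerm L m k :=
        tprod_one_add_sub_one_le_two_mul_tsum (hL.prodTerm_nonneg m) (hL.summable_prodTerm m) h1
    _ ≤ 2 * (5 / -L m) := by linarith
    _ = 10 / -L m := by ring

theorem tendsto_sq_mul_tprod_sub_one (hL : IsNegSpectralDecimation L)
    (hLbot : Tendsto L atBot atBot) :
    Tendsto (fun n => L n ^ 2 * (∏' k, (1 + prodTerm L (n - 2) k) - 1)) atBot (𝓝 0) := by
  have hinv : Tendsto (fun n => 10 * (L n)⁻¹ ^ 2) atBot (𝓝 0) := by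
    simpa using ((tendsto_inv_atBot_zero.comp hLbot).pow 2).const_mul 10
  refine tendsto_of_tendsto_of_tendsto_of_le_of_le' tendsto_const_nhds hinv ?_ ?_
  · refine Eventually.of_forall fun n => mul_nonneg (sq_nonneg _) (sub_nonneg.2 ?_)
    exact one_le_tprod_of_one_le₀ fun k => le_add_of_nonneg_right (hL.prodTerm_nonneg _ k)
  · filter_upwards [hLbot.eventually_le_atBot (-5)] with n hn
    have h4 := hL.sub_two_le_neg_pow_four n
    have h2 : L (n - 2) ≤ -5 := by
      have := hL.le_pow_mul n 2
      push_cast at this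
      linarith
    have hy : 0 < L n ^ 2 := by nlinarith
    have hy4 : 0 < L n ^ 4 := by simpa [← pow_mul] using pow_pos hy 2
    calc L n ^ 2 * (∏' k, (1 + prodTerm L (n - 2) k) - 1)
        ≤ L n ^ 2 * (10 / -L (n - 2)) := by
          gcongr; exact hL.tprod_one_add_prodTerm_sub_one_le h2
      _ ≤ L n ^ 2 * (10 / L n ^ 4) := by
          gcongr
          linarith
      _ = 10 * (L n)⁻¹ ^ 2 := by field_simp

end IsNegSpectralDecimation

theorem lambda_mul_e_tendsto_neg_one (L : ℤ → ℝ) (hLneg : ∀ n, L n < 0)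
    (hLrec : ∀ n, L (n - 1) = L n * (5 - L n))
    (hLbot : Filter.Tendsto L Filter.atBot Filter.atBot) :
    Filter.Tendsto
      (fun n : ℤ =>
        L n * ((1 - L n / 4) - (-(L n) / 4) * ∏' k : ℕ, (1 + 4 / (2 - L (n - k)))))
      Filter.atBot (nhds (-1)) := by
  have hL : IsNegSpectralDecimation L := ⟨hLneg, hLrec⟩
  have hsplit : ∀ n, L n * ((1 - L n / 4) - (-(L n) / 4) * ∏' k : ℕ, (1 + prodTerm L n k))
      = (L n * (1 - L n / 4)
          + L n ^ 2 / 4 * ((1 + 4 / (2 - L n)) * (1 + 4 / (2 - L n * (5 - L n)))))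
        + (1 + prodTerm L n 0) * (1 + prodTerm L n 1) / 4
          * (L n ^ 2 * (∏' k, (1 + prodTerm L (n - 2) k) - 1)) := by
    intro n
    rw [hL.tprod_one_add_prodTerm, prodTerm, prodTerm, ← hLrec]
    push_cast
    ring_nf
  have hfactor : Tendsto (fun n => (1 + prodTerm L n 0) * (1 + prodTerm L n 1) / 4) atBot
      (𝓝 ((1 + 0) * (1 + 0) / 4)) :=
    (((tendsto_prodTerm hLbot 0).const_add 1).mul
      ((tendsto_prodTerm hLbot 1).const_add 1)).div_const 4
  have hlim := (tendsto_lambda_mul_e_truncated.comp hLbot).add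
    (hfactor.mul (hL.tendsto_sq_mul_tprod_sub_one hLbot))
  rw [show (-1 : ℝ) + (1 + 0) * (1 + 0) / 4 * 0 = -1 by norm_num] at hlim
  exact hlim.congr fun n => (hsplit n).symm
end

section
/- Let (λ_n) be negative reals with λ_{n-1} = λ_n(5-λ_n) for all n, and suppose |λ_0| ≥ 1. Define e₂(n) = 2/(2-λ_n) + λ_n/(2-λ_{n-1}). Then λ_n·e₂(n) + 1 = O(1/λ_n) as n → -∞; precisely, there is a constant C with |λ_n·e₂(n) + 1| ≤ C/|λ_n| for all sufficiently negative n. -/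
theorem e2_asymptotics (L : ℤ → ℝ) (hLneg : ∀ n, L n < 0)
    (hLrec : ∀ n, L (n - 1) = L n * (5 - L n)) (hL0 : 1 ≤ |L 0|) :
    ∃ C : ℝ, ∃ N : ℤ, ∀ n ≤ N,
      |L n * (2 / (2 - L n) + L n / (2 - L (n - 1))) + 1| ≤ C / |L n| := by
  have hL0' : L 0 ≤ -1 := by
    rcases abs_cases (L 0) with ⟨h, _⟩ | ⟨h, _⟩
    · linarith [hLneg 0, hL0.trans_eq h]
    · linarith [hL0.trans_eq h]
  have hkey : ∀ k : ℕ, L (-(k : ℤ)) ≤ -1 := by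
    intro k
    induction k with
    | zero => simpa using hL0'
    | succ k ih =>
      have h : (-(k + 1 : ℕ) : ℤ) = (-(k : ℤ)) - 1 := by push_cast; ring
      rw [h, hLrec]
      nlinarith [ih]
  refine ⟨13, 0, fun n hn => ?_⟩
  have hLn : L n ≤ -1 := by
    have : n = -((n.natAbs : ℕ) : ℤ) := by
      omega
    rw [this]; exact hkey _
  set t := L n with ht
  have hneg : t < 0 := hLneg n
  have h2 : (0:ℝ) < 2 - t := by linarith
  have hq : (0:ℝ) < 2 - t * (5 - t) := by nlinarith
  rw [hLrec]
  have key : t * (2 / (2 - t) + t / (2 - t * (5 - t))) + 1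
      = (-t ^ 2 - 8 * t + 4) / ((2 - t) * (2 - t * (5 - t))) := by
    field_simp
    ring
  have hD : (0:ℝ) < (2 - t) * (2 - t * (5 - t)) := mul_pos h2 hq
  rw [key, abs_div, abs_of_pos hD, abs_of_neg hneg,
    div_le_div_iff₀ hD (by linarith : (0:ℝ) < -t)]
  rcases abs_cases (-t ^ 2 - 8 * t + 4) with ⟨h, _⟩ | ⟨h, _⟩ <;> rw [h] <;> nlinarith
end

section
/- Let a, b be real sequences (indexed by ℤ) with a_n < 0 for all n and a_{n-1} = a_n(5-a_n). If a sequence (u_n) satisfies u_n > 1 for some n₀ and the recursion u_n = ((4-a_n)+(6-a_n)u_{n-1})/((2-a_n)(5-a_n)), then solving backwards, u_{n-1} = ((2-a_n)(5-a_n)u_n - (4-a_n))/(6-a_n), and u_n > 1 implies u_{n-1} > 1. -/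
theorem backward_solve_and_monotone (a : ℤ → ℝ) (haneg : ∀ n, a n < 0)
    (harec : ∀ n, a (n - 1) = a n * (5 - a n))
    (u : ℤ → ℝ)
    (hurec : ∀ n, u n = ((4 - a n) + (6 - a n) * u (n - 1)) / ((2 - a n) * (5 - a n))) :
    ∀ n, u (n - 1) = ((2 - a n) * (5 - a n) * u n - (4 - a n)) / (6 - a n) ∧
      (1 < u n → 1 < u (n - 1)) := by
  intro n
  have ha := haneg n
  have h2 : (0:ℝ) < 2 - a n := by linarith
  have h5 : (0:ℝ) < 5 - a n := by linarith
  have h6 : (0:ℝ) < 6 - a n := by linarith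
  have h25 : (0:ℝ) < (2 - a n) * (5 - a n) := mul_pos h2 h5
  have hrec := hurec n
  have hsolve : u (n - 1) = ((2 - a n) * (5 - a n) * u n - (4 - a n)) / (6 - a n) := by
    field_simp at hrec ⊢
    nlinarith [hrec]
  refine ⟨hsolve, fun hu => ?_⟩
  rw [hsolve]
  rw [lt_div_iff₀ h6]
  nlinarith [mul_pos h2 h5, mul_lt_mul_of_pos_left hu h25]
end

section
/- Define (α_j) by α_0=1, α_1=1/6, and α_j=(4/(5^j-5))Σ_{ℓ=1}^{j-1}α_{j-ℓ}α_ℓ for j≥2. Then for every real z ≥ 0, the series Σ_{j=0}^∞ α_j z^j converges (i.e., the power series with coefficients α_j has infinite radius of convergence). -/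
/-! Induction shows `0 ≤ α j ≤ 1 / j!`: by the hypothesis on the smaller indices the convolution
`∑ α (j - ℓ) α ℓ` is at most `∑ (j choose ℓ) / j! ≤ 2 ^ j / j!`, and the prefactor `4 / (5 ^ j - 5)`
is at most `2⁻ʲ`. The series is then dominated by the exponential series. -/

open Finset Nat

lemma four_mul_two_pow_add_five_le_five_pow {j : ℕ} (hj : 2 ≤ j) : 4 * 2 ^ j + 5 ≤ 5 ^ j := by
  induction j, hj using Nat.le_induction with
  | base => norm_num
  | succ j _ ih => rw [pow_succ, pow_succ]; omega

lemma sum_Ico_one_choose_le_two_pow (j : ℕ) : ∑ ℓ ∈ Ico 1 j, j.choose ℓ ≤ 2 ^ j := by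
  calc ∑ ℓ ∈ Ico 1 j, j.choose ℓ ≤ ∑ ℓ ∈ range (j + 1), j.choose ℓ :=
        sum_le_sum_of_subset fun ℓ hℓ => by simp only [mem_Ico, mem_range] at hℓ ⊢; omega
    _ = 2 ^ j := Nat.sum_range_choose j

lemma inv_factorial_mul_inv_factorial {ℓ j : ℕ} (h : ℓ ≤ j) :
    1 / ((j - ℓ)! : ℝ) * (1 / ℓ !) = j.choose ℓ / j ! := by
  rw [Nat.cast_choose ℝ h]
  field_simp

section Convolution

variable {α : ℕ → ℝ} {j : ℕ}

lemma sum_Ico_one_mul_nonneg (h : ∀ i < j, 0 ≤ α i) :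
    0 ≤ ∑ ℓ ∈ Ico 1 j, α (j - ℓ) * α ℓ :=
  sum_nonneg fun ℓ hℓ => by
    rw [mem_Ico] at hℓ
    exact mul_nonneg (h _ (by omega)) (h _ (by omega))

lemma sum_Ico_one_mul_le_two_pow_div_factorial (h : ∀ i < j, 0 ≤ α i ∧ α i ≤ 1 / i !) :
    ∑ ℓ ∈ Ico 1 j, α (j - ℓ) * α ℓ ≤ 2 ^ j / j ! := by
  have hterm : ∀ ℓ ∈ Ico 1 j, α (j - ℓ) * α ℓ ≤ j.choose ℓ / j ! := by
    intro ℓ hℓ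
    rw [mem_Ico] at hℓ
    obtain ⟨hℓ0, hℓ'⟩ := h ℓ (by omega)
    obtain ⟨-, hjℓ'⟩ := h (j - ℓ) (by omega)
    rw [← inv_factorial_mul_inv_factorial hℓ.2.le]
    exact mul_le_mul hjℓ' hℓ' hℓ0 (by positivity)
  calc ∑ ℓ ∈ Ico 1 j, α (j - ℓ) * α ℓ ≤ ∑ ℓ ∈ Ico 1 j, (j.choose ℓ : ℝ) / j ! := sum_le_sum hterm
    _ = ((∑ ℓ ∈ Ico 1 j, j.choose ℓ : ℕ) : ℝ) / j ! := by rw [← sum_div]; push_cast; rfl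
    _ ≤ 2 ^ j / j ! := by
        gcongr
        exact_mod_cast sum_Ico_one_choose_le_two_pow j

end Convolution

lemma nonneg_and_le_inv_factorial_of_convolution_rec (α c : ℕ → ℝ)
    (h0 : 0 ≤ α 0 ∧ α 0 ≤ 1) (h1 : 0 ≤ α 1 ∧ α 1 ≤ 1)
    (hc : ∀ j ≥ 2, 0 ≤ c j ∧ c j * 2 ^ j ≤ 1)
    (hrec : ∀ j ≥ 2, α j = c j * ∑ ℓ ∈ Ico 1 j, α (j - ℓ) * α ℓ) (j : ℕ) :
    0 ≤ α j ∧ α j ≤ 1 / j ! := by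
  induction j using Nat.strong_induction_on with
  | _ j ih =>
    match j, ih with
    | 0, _ => simpa using h0
    | 1, _ => simpa using h1
    | j + 2, ih =>
      obtain ⟨hc0, hc2⟩ := hc (j + 2) (by omega)
      have hsum := sum_Ico_one_mul_le_two_pow_div_factorial ih
      rw [hrec (j + 2) (by omega)]
      refine ⟨mul_nonneg hc0 (sum_Ico_one_mul_nonneg fun i hi => (ih i hi).1), ?_⟩
      calc c (j + 2) * ∑ ℓ ∈ Ico 1 (j + 2), α (j + 2 - ℓ) * α ℓ
          ≤ c (j + 2) * (2 ^ (j + 2) / (j + 2)!) := mul_le_mul_of_nonneg_left hsum hc0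
        _ = c (j + 2) * 2 ^ (j + 2) * (1 / (j + 2)!) := by ring
        _ ≤ 1 / (j + 2)! := mul_le_of_le_one_left (by positivity) hc2

lemma four_div_five_pow_sub_five_mul_two_pow_le_one {j : ℕ} (hj : 2 ≤ j) :
    0 ≤ 4 / ((5 : ℝ) ^ j - 5) ∧ 4 / ((5 : ℝ) ^ j - 5) * 2 ^ j ≤ 1 := by
  have h : (4 * 2 ^ j + 5 : ℝ) ≤ 5 ^ j := by exact_mod_cast four_mul_two_pow_add_five_le_five_pow hj
  have hpos : (0 : ℝ) < 5 ^ j - 5 := by linarith [pow_pos (two_pos (α := ℝ)) j]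
  refine ⟨by positivity, ?_⟩
  rw [div_mul_eq_mul_div, div_le_one hpos]
  linarith

theorem alpha_series_entire (α : ℕ → ℝ) (hα0 : α 0 = 1) (hα1 : α 1 = 1/6)
    (hαrec : ∀ j ≥ 2, α j = (4 / ((5:ℝ)^j - 5)) * ∑ ℓ ∈ Finset.Ico 1 j, α (j - ℓ) * α ℓ) :
    ∀ z : ℝ, 0 ≤ z → Summable (fun j : ℕ => α j * z ^ j) := by
  intro z hz
  have hbound := nonneg_and_le_inv_factorial_of_convolution_rec α (fun j => 4 / ((5 : ℝ) ^ j - 5))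
    (by norm_num [hα0]) (by norm_num [hα1])
    (fun j hj => four_div_five_pow_sub_five_mul_two_pow_le_one hj) hαrec
  refine (Real.summable_pow_div_factorial z).of_nonneg_of_le
    (fun j => mul_nonneg (hbound j).1 (pow_nonneg hz j)) fun j => ?_
  calc α j * z ^ j ≤ 1 / j ! * z ^ j := by gcongr; exact (hbound j).2
    _ = z ^ j / j ! := by ring
end
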